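/- Under the hypotheses of the previous dissipation inequality, integrating from 0 to T yields that the polytopic system y = Gu satisfies the conic inequality −‖y‖²_{2T} + (a+b)·⟨y, u⟩_T − a·b·‖u‖²_{2T} ≥ −xᵀ(0)·P·x(0) for all T ≥ 0, i.e. G ∈ cone[a,b] with bias β = −2V(0). -/

import Mathlib

/-!
At every instant the frozen-time system is a convex combination of the vertex systems
`(Aᵢ, Bᵢ, Cᵢ)`. For each vertex the three matrix identities say that the quadratic form of the
storage derivative plus the square `‖Lᵢ x + Wᵢ u‖²` equals the cone supply rate, so the storage
`V = xᵀ P x` dissipates the supply rate at every vertex. The derivative of `V` is affine in the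
vertex weights, while the supply rate is concave in the output `y`; hence the dissipation
inequality survives the convex combination. Integrating it over `[0, T]` and dropping
`V(T) ≥ 0` gives the conic inequality with bias `-V(0)`.
-/

open Matrix MeasureTheory

namespace Matrix

variable {ι m n : Type*} [Fintype n]

theorem dotProduct_self_sum_smul_le (t : Finset ι) (w : ι → ℝ) (hw : ∀ i ∈ t, 0 ≤ w i)
    (hw₁ : ∑ i ∈ t, w i = 1) (v : ι → n → ℝ) :
    (∑ i ∈ t, w i • v i) ⬝ᵥ (∑ i ∈ t, w i • v i) ≤ ∑ i ∈ t, w i * (v i ⬝ᵥ v i) := by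
  simp only [dotProduct, Finset.mul_sum]
  rw [Finset.sum_comm]
  refine Finset.sum_le_sum fun j _ => ?_
  have := (even_two.convexOn_pow (𝕜 := ℝ)).map_sum_le hw hw₁ (p := fun i => v i j)
    fun _ _ => Set.mem_univ _
  simpa [sq, Finset.sum_apply, ← mul_assoc] using this

theorem sum_smul_mulVec (t : Finset ι) (w : ι → ℝ) (M : ι → Matrix m n ℝ) (v : n → ℝ) :
    (∑ i ∈ t, w i • M i) *ᵥ v = ∑ i ∈ t, w i • (M i *ᵥ v) := by
  simp only [sum_mulVec, smul_mulVec]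

end Matrix

section Derivatives

variable {n : Type*} [Fintype n] {f g : ℝ → n → ℝ} {f' g' : n → ℝ} {t : ℝ}

theorem HasDerivAt.dotProduct (hf : HasDerivAt f f' t) (hg : HasDerivAt g g' t) :
    HasDerivAt (fun τ => f τ ⬝ᵥ g τ) (f' ⬝ᵥ g t + f t ⬝ᵥ g') t := by
  simp only [_root_.dotProduct, ← Finset.sum_add_distrib]
  exact HasDerivAt.fun_sum fun i _ => (hasDerivAt_pi.1 hf i).mul (hasDerivAt_pi.1 hg i)

theorem HasDerivAt.mulVec {m : Type*} (M : Matrix m n ℝ) (hf : HasDerivAt f f' t) :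
    HasDerivAt (fun τ => M *ᵥ f τ) (M *ᵥ f') t :=
  hasDerivAt_pi.2 fun i => by
    have h := (hasDerivAt_const t (M i)).dotProduct hf
    rwa [zero_dotProduct, zero_add] at h

end Derivatives

theorem neg_le_integral_of_deriv_le {V f : ℝ → ℝ} {T : ℝ} (hT : 0 ≤ T)
    (hV : Differentiable ℝ V) (hVf : ∀ t, deriv V t ≤ f t)
    (hf : IntervalIntegrable f volume 0 T) (hVT : 0 ≤ V T) :
    -V 0 ≤ ∫ t in (0:ℝ)..T, f t := by
  have hFTC := intervalIntegral.sub_le_integral_of_hasDeriv_right_of_le hT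
    hV.continuous.continuousOn (fun t _ => (hV t).hasDerivAt.hasDerivWithinAt)
    ((intervalIntegrable_iff_integrableOn_Icc_of_le hT).1 hf) fun t _ => hVf t
  linarith

def coneSupply {m : Type*} [Fintype m] (a b : ℝ) (y u : m → ℝ) : ℝ :=
  -(y ⬝ᵥ y) + (a + b) * (y ⬝ᵥ u) - a * b * (u ⬝ᵥ u)

theorem sum_mul_coneSupply_le {ι m : Type*} [Fintype m] (a b : ℝ) (t : Finset ι) (w : ι → ℝ)
    (hw : ∀ i ∈ t, 0 ≤ w i) (hw₁ : ∑ i ∈ t, w i = 1) (y : ι → m → ℝ) (u : m → ℝ) :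
    ∑ i ∈ t, w i * coneSupply a b (y i) u ≤ coneSupply a b (∑ i ∈ t, w i • y i) u := by
  have hconv := dotProduct_self_sum_smul_le t w hw hw₁ y
  have hlin : (∑ i ∈ t, w i • y i) ⬝ᵥ u = ∑ i ∈ t, w i * (y i ⬝ᵥ u) := by
    simp only [sum_dotProduct, smul_dotProduct, smul_eq_mul]
  have hconst : ∑ i ∈ t, w i * (a * b * (u ⬝ᵥ u)) = a * b * (u ⬝ᵥ u) := by
    rw [← Finset.sum_mul, hw₁, one_mul]
  have hexpand : ∑ i ∈ t, w i * coneSupply a b (y i) u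
      = -∑ i ∈ t, w i * (y i ⬝ᵥ y i) + (a + b) * ((∑ i ∈ t, w i • y i) ⬝ᵥ u)
        - a * b * (u ⬝ᵥ u) := by
    rw [hlin, Finset.mul_sum, ← hconst]
    simp only [← Finset.sum_neg_distrib, ← Finset.sum_add_distrib, ← Finset.sum_sub_distrib]
    exact Finset.sum_congr rfl fun i _ => by unfold coneSupply; ring
  rw [hexpand, coneSupply]
  linarith

section Integral

variable {m : Type*} [Fintype m] (a b : ℝ) {y u : ℝ → m → ℝ} {t₀ t₁ : ℝ}

theorem intervalIntegrable_coneSupply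
    (hy : IntervalIntegrable (fun t => y t ⬝ᵥ y t) volume t₀ t₁)
    (hu : IntervalIntegrable (fun t => u t ⬝ᵥ u t) volume t₀ t₁)
    (hyu : IntervalIntegrable (fun t => y t ⬝ᵥ u t) volume t₀ t₁) :
    IntervalIntegrable (fun t => coneSupply a b (y t) (u t)) volume t₀ t₁ :=
  (hy.neg.add (hyu.const_mul _)).sub (hu.const_mul _)

theorem integral_coneSupply
    (hy : IntervalIntegrable (fun t => y t ⬝ᵥ y t) volume t₀ t₁)
    (hu : IntervalIntegrable (fun t => u t ⬝ᵥ u t) volume t₀ t₁)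
    (hyu : IntervalIntegrable (fun t => y t ⬝ᵥ u t) volume t₀ t₁) :
    ∫ t in t₀..t₁, coneSupply a b (y t) (u t)
      = -(∫ t in t₀..t₁, y t ⬝ᵥ y t) + (a + b) * (∫ t in t₀..t₁, y t ⬝ᵥ u t)
        - a * b * (∫ t in t₀..t₁, u t ⬝ᵥ u t) := by
  simp only [coneSupply]
  rw [intervalIntegral.integral_sub, intervalIntegral.integral_add,
    intervalIntegral.integral_neg, intervalIntegral.integral_const_mul,
    intervalIntegral.integral_const_mul]
  · exact hy.neg
  · exact hyu.const_mul _
  · exact hy.neg.add (hyu.const_mul _)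
  · exact hu.const_mul _

end Integral

section Dissipation

variable {n m k : Type*} [Fintype n] [Fintype m] [Fintype k] [DecidableEq m]
  {P : Matrix n n ℝ} {a b : ℝ}

def storageDeriv (P : Matrix n n ℝ) (x v : n → ℝ) : ℝ :=
  v ⬝ᵥ P *ᵥ x + x ⬝ᵥ P *ᵥ v

theorem storageDeriv_sum_smul {ι : Type*} (P : Matrix n n ℝ) (x : n → ℝ) (t : Finset ι)
    (w : ι → ℝ) (v : ι → n → ℝ) :
    storageDeriv P x (∑ i ∈ t, w i • v i) = ∑ i ∈ t, w i * storageDeriv P x (v i) := by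
  simp only [storageDeriv, sum_dotProduct, mulVec_sum, dotProduct_sum, smul_dotProduct,
    mulVec_smul, dotProduct_smul, smul_eq_mul, mul_add, Finset.sum_add_distrib]

theorem storageDeriv_add_sq_eq_coneSupply {A : Matrix n n ℝ} {B : Matrix n m ℝ}
    {C : Matrix m n ℝ} {L : Matrix k n ℝ} {W : Matrix k m ℝ} (hP : P.IsSymm)
    (h1 : P * A + Aᵀ * P + Cᵀ * C = -(Lᵀ * L))
    (h2 : P * B - ((a + b) / 2) • Cᵀ = -(Lᵀ * W))
    (h3 : (a * b) • (1 : Matrix m m ℝ) = -(Wᵀ * W)) (x : n → ℝ) (u : m → ℝ) :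
    storageDeriv P x (A *ᵥ x + B *ᵥ u) + (L *ᵥ x + W *ᵥ u) ⬝ᵥ (L *ᵥ x + W *ᵥ u)
      = coneSupply a b (C *ᵥ x) u := by
  have e1 := congrArg (fun M => x ⬝ᵥ M *ᵥ x) h1
  have e2 := congrArg (fun M => x ⬝ᵥ M *ᵥ u) h2
  have e3 := congrArg (fun M => u ⬝ᵥ M *ᵥ u) h3
  simp only [add_mulVec, sub_mulVec, neg_mulVec, smul_mulVec, one_mulVec, ← mulVec_mulVec,
    dotProduct_add, dotProduct_sub, dotProduct_neg, dotProduct_smul, smul_eq_mul,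
    dotProduct_transpose_mulVec] at e1 e2 e3
  have hsymm : ∀ v w, v ⬝ᵥ P *ᵥ w = w ⬝ᵥ P *ᵥ v := fun v w => by
    rw [← dotProduct_transpose_mulVec, hP.eq]
  simp only [storageDeriv, coneSupply, add_dotProduct, dotProduct_add, mulVec_add]
  rw [dotProduct_comm (P *ᵥ x)] at e1
  rw [dotProduct_comm u, dotProduct_comm (W *ᵥ u)] at e2
  rw [hsymm (B *ᵥ u), dotProduct_comm (W *ᵥ u) (L *ᵥ x)]
  linear_combination e1 + 2 * e2 + e3

theorem storageDeriv_le_coneSupply {A : Matrix n n ℝ} {B : Matrix n m ℝ}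
    {C : Matrix m n ℝ} {L : Matrix k n ℝ} {W : Matrix k m ℝ} (hP : P.IsSymm)
    (h1 : P * A + Aᵀ * P + Cᵀ * C = -(Lᵀ * L))
    (h2 : P * B - ((a + b) / 2) • Cᵀ = -(Lᵀ * W))
    (h3 : (a * b) • (1 : Matrix m m ℝ) = -(Wᵀ * W)) (x : n → ℝ) (u : m → ℝ) :
    storageDeriv P x (A *ᵥ x + B *ᵥ u) ≤ coneSupply a b (C *ᵥ x) u :=
  (le_add_of_nonneg_right (Finset.sum_nonneg fun _ _ => mul_self_nonneg _)).trans_eq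
    (storageDeriv_add_sq_eq_coneSupply hP h1 h2 h3 x u)

theorem storageDeriv_le_coneSupply_of_convex {ι : Type*} [Fintype ι]
    {A : ι → Matrix n n ℝ} {B : ι → Matrix n m ℝ} {C : ι → Matrix m n ℝ}
    {L : ι → Matrix k n ℝ} {W : ι → Matrix k m ℝ} (hP : P.IsSymm)
    (h1 : ∀ i, P * A i + (A i)ᵀ * P + (C i)ᵀ * C i = -((L i)ᵀ * L i))
    (h2 : ∀ i, P * B i - ((a + b) / 2) • (C i)ᵀ = -((L i)ᵀ * W i))
    (h3 : ∀ i, (a * b) • (1 : Matrix m m ℝ) = -((W i)ᵀ * W i))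
    {w : ι → ℝ} (hw : ∀ i, 0 ≤ w i) (hw₁ : ∑ i, w i = 1) (x : n → ℝ) (u : m → ℝ) :
    storageDeriv P x ((∑ i, w i • A i) *ᵥ x + (∑ i, w i • B i) *ᵥ u)
      ≤ coneSupply a b ((∑ i, w i • C i) *ᵥ x) u := by
  have hcomb : (∑ i, w i • A i) *ᵥ x + (∑ i, w i • B i) *ᵥ u
      = ∑ i, w i • (A i *ᵥ x + B i *ᵥ u) := by
    simp only [sum_smul_mulVec, smul_add, Finset.sum_add_distrib]
  rw [hcomb, storageDeriv_sum_smul, sum_smul_mulVec]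
  calc _ ≤ ∑ i, w i * coneSupply a b (C i *ᵥ x) u :=
        Finset.sum_le_sum fun i _ => mul_le_mul_of_nonneg_left
          (storageDeriv_le_coneSupply hP (h1 i) (h2 i) (h3 i) x u) (hw i)
    _ ≤ _ := sum_mul_coneSupply_le a b _ w (fun i _ => hw i) hw₁ _ u

end Dissipation

theorem statement_11_general {N n m : ℕ}
    (A : Fin N → Matrix (Fin n) (Fin n) ℝ)
    (B : Fin N → Matrix (Fin n) (Fin m) ℝ)
    (C : Fin N → Matrix (Fin m) (Fin n) ℝ)
    (a b : ℝ)
    (P : Matrix (Fin n) (Fin n) ℝ) (hP : P.PosDef)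
    {k : ℕ} (L : Fin N → Matrix (Fin k) (Fin n) ℝ)
    (W : Fin N → Matrix (Fin k) (Fin m) ℝ)
    (h1 : ∀ i, P * A i + (A i)ᵀ * P + (C i)ᵀ * C i = -((L i)ᵀ * L i))
    (h2 : ∀ i, P * B i - ((a + b) / 2) • (C i)ᵀ = -((L i)ᵀ * W i))
    (h3 : ∀ i, (a * b) • (1 : Matrix (Fin m) (Fin m) ℝ) = -((W i)ᵀ * W i))
    (s : ℝ → (Fin N → ℝ))
    (hs_nonneg : ∀ t i, 0 ≤ s t i) (hs_sum : ∀ t, ∑ i, s t i = 1)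
    (x : ℝ → (Fin n → ℝ)) (u : ℝ → (Fin m → ℝ))
    (hx : ∀ t, HasDerivAt x
      ((∑ i, s t i • A i) *ᵥ x t + (∑ i, s t i • B i) *ᵥ u t) t)
    (y : ℝ → (Fin m → ℝ)) (hy : ∀ t, y t = (∑ i, s t i • C i) *ᵥ x t)
    (T : ℝ) (hT : 0 ≤ T)
    (hyInt : IntervalIntegrable (fun t => y t ⬝ᵥ y t) volume 0 T)
    (huInt : IntervalIntegrable (fun t => u t ⬝ᵥ u t) volume 0 T)
    (hyuInt : IntervalIntegrable (fun t => y t ⬝ᵥ u t) volume 0 T) :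
    -(∫ t in (0:ℝ)..T, y t ⬝ᵥ y t) + (a + b) * (∫ t in (0:ℝ)..T, y t ⬝ᵥ u t)
      - a * b * (∫ t in (0:ℝ)..T, u t ⬝ᵥ u t) ≥ -(x 0 ⬝ᵥ P *ᵥ x 0) := by
  have hPsymm : P.IsSymm := by simpa using hP.1
  set V : ℝ → ℝ := fun t => x t ⬝ᵥ P *ᵥ x t
  have hV : ∀ t, HasDerivAt V _ t := fun t => (hx t).dotProduct ((hx t).mulVec P)
  have hdiss : ∀ t, deriv V t ≤ coneSupply a b (y t) (u t) := fun t => by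
    rw [(hV t).deriv, hy t]
    exact storageDeriv_le_coneSupply_of_convex hPsymm h1 h2 h3 (hs_nonneg t) (hs_sum t) _ _
  have hVT : 0 ≤ V T := hP.posSemidef.dotProduct_mulVec_nonneg (x T)
  rw [ge_iff_le, ← integral_coneSupply a b hyInt huInt hyuInt]
  exact neg_le_integral_of_deriv_le hT (fun t => (hV t).differentiableAt) hdiss
    (intervalIntegrable_coneSupply a b hyInt huInt hyuInt) hVT

/-- Integrating the dissipation inequality yields the conic inequality with bias
β = −xᵀ(0)Px(0) for the polytopic system. -/
theorem statement_11 {N n m : ℕ}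
    (A : Fin N → Matrix (Fin n) (Fin n) ℝ)
    (B : Fin N → Matrix (Fin n) (Fin m) ℝ)
    (C : Fin N → Matrix (Fin m) (Fin n) ℝ)
    (a b : ℝ) (ha : a < 0) (hb : 0 < b)
    (P : Matrix (Fin n) (Fin n) ℝ) (hP : P.PosDef)
    {k : ℕ} (L : Fin N → Matrix (Fin k) (Fin n) ℝ)
    (W : Fin N → Matrix (Fin k) (Fin m) ℝ)
    (h1 : ∀ i, P * A i + (A i)ᵀ * P + (C i)ᵀ * C i = -((L i)ᵀ * L i))
    (h2 : ∀ i, P * B i - ((a + b) / 2) • (C i)ᵀ = -((L i)ᵀ * W i))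
    (h3 : ∀ i, (a * b) • (1 : Matrix (Fin m) (Fin m) ℝ) = -((W i)ᵀ * W i))
    (s : ℝ → (Fin N → ℝ)) (hs_cont : Continuous s)
    (hs_nonneg : ∀ t i, 0 ≤ s t i) (hs_sum : ∀ t, ∑ i, s t i = 1)
    (x : ℝ → (Fin n → ℝ)) (u : ℝ → (Fin m → ℝ)) (hu : Continuous u)
    (hx : ∀ t, HasDerivAt x
      ((∑ i, s t i • A i) *ᵥ x t + (∑ i, s t i • B i) *ᵥ u t) t)
    (y : ℝ → (Fin m → ℝ)) (hy : ∀ t, y t = (∑ i, s t i • C i) *ᵥ x t)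
    (T : ℝ) (hT : 0 ≤ T)
    (hyInt : IntervalIntegrable (fun t => y t ⬝ᵥ y t) volume 0 T)
    (huInt : IntervalIntegrable (fun t => u t ⬝ᵥ u t) volume 0 T)
    (hyuInt : IntervalIntegrable (fun t => y t ⬝ᵥ u t) volume 0 T) :
    -(∫ t in (0:ℝ)..T, y t ⬝ᵥ y t) + (a + b) * (∫ t in (0:ℝ)..T, y t ⬝ᵥ u t)
      - a * b * (∫ t in (0:ℝ)..T, u t ⬝ᵥ u t) ≥ -(x 0 ⬝ᵥ P *ᵥ x 0) :=
  statement_11_general A B C a b P hP L W h1 h2 h3 s hs_nonneg hs_sum x u hx y hy T hT hyInt huInt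
    hyuInt
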